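/- Let w = u·a·v·b·Sym(u)·b be an element of F_n, where u·a is the principal prefix of w. Then both u and u·a·v are palindromes. -/
import Mathlib


/-- The two-letter alphabet {a, b}. -/
inductive Letter : Type
  | a : Letter
  | b : Letter
deriving DecidableEq, BEq, Repr

/-- Words over the alphabet {a, b}. -/
abbrev Word := List Letter

/-- δ(w) = |w|_a − |w|_b. -/
def delta (w : Word) : ℤ := (w.count Letter.a : ℤ) - (w.count Letter.b : ℤ)

/-- A Dyck word: δ(w) = 0 and δ(p) ≥ 0 for every prefix p of w. -/
def IsDyck (w : Word) : Prop := delta w = 0 ∧ ∀ p : Word, p <+: w → 0 ≤ delta p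

/-- Membership in D_n: w = d·b with d a Dyck word of length 2n. -/
def InD (n : ℕ) (w : Word) : Prop :=
  ∃ d : Word, IsDyck d ∧ d.length = 2 * n ∧ w = d ++ [Letter.b]

/-- Exchanging the letters a and b. -/
def Letter.flip : Letter → Letter
  | .a => .b
  | .b => .a

/-- The complement w̄ of a word w. -/
def comp (w : Word) : Word := w.map Letter.flip

/-- Sym(w): the complement of the mirror (reversal) of w. -/
def sym (w : Word) : Word := comp w.reverse

/-- A palindrome: a word equal to its mirror. -/
def Palindrome (w : Word) : Prop := w.reverse = w

/-- w' is a conjugate of w: w = u·v and w' = v·u. -/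
def Conj (w w' : Word) : Prop := ∃ u v : Word, w = u ++ v ∧ w' = v ++ u

/-- u is the principal prefix of w: the shortest prefix of w with δ(u) maximal. -/
def IsPrincipalPrefix (u w : Word) : Prop :=
  u <+: w ∧ (∀ p : Word, p <+: w → delta p ≤ delta u) ∧
    (∀ p : Word, p <+: w → delta p = delta u → u.length ≤ p.length)

/-- The graph of the map γ: writing w = u·v·b with u the principal prefix of w,
    γ(w) = v̄·b·ū. -/
def GammaRel (w w' : Word) : Prop :=
  ∃ u v : Word, IsPrincipalPrefix u w ∧ w = u ++ v ++ [Letter.b] ∧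
    w' = comp v ++ [Letter.b] ++ comp u

/-- F_n: the fixed points of γ in D_n. -/
def InF (n : ℕ) (w : Word) : Prop := InD n w ∧ GammaRel w w

/-- F_γ = ⋃_{n ≥ 1} F_n. -/
def InFgamma (w : Word) : Prop := ∃ n : ℕ, 1 ≤ n ∧ InF n w

/-- x^y: concatenation of the word x with itself y times. -/
def wpow (x : Word) : ℕ → Word
  | 0 => []
  | k + 1 => x ++ wpow x k

section GammaAux

@[simp] lemma Letter.flip_a : Letter.a.flip = Letter.b := rfl
@[simp] lemma Letter.flip_b : Letter.b.flip = Letter.a := rfl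
@[simp] lemma Letter.flip_flip (c : Letter) : c.flip.flip = c := by cases c <;> rfl

@[simp] lemma comp_nil : comp [] = [] := rfl
@[simp] lemma comp_cons (c : Letter) (w : Word) : comp (c :: w) = c.flip :: comp w := rfl
@[simp] lemma comp_append (x y : Word) : comp (x ++ y) = comp x ++ comp y := by
  simp [comp]
@[simp] lemma comp_comp (w : Word) : comp (comp w) = w := by
  simp [comp, List.map_map, Function.comp_def]
@[simp] lemma comp_length (w : Word) : (comp w).length = w.length := by simp [comp]
@[simp] lemma comp_reverse (w : Word) : (comp w).reverse = comp w.reverse := by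
  simp [comp]

lemma comp_inj {x y : Word} (h : comp x = comp y) : x = y := by
  have := congrArg comp h
  simpa using this

lemma comp_eq_self {w : Word} (h : comp w = w) : w = [] := by
  cases w with
  | nil => rfl
  | cons c t =>
    simp at h
    cases c <;> simp at h

lemma split_prefix {x s y t : Word} (h : x ++ s = y ++ t) (hl : x.length ≤ y.length) :
    ∃ r, y = x ++ r ∧ s = r ++ t := by
  have hx : x <+: x ++ s := List.prefix_append x s
  have hy : y <+: x ++ s := by rw [h]; exact List.prefix_append y t
  obtain ⟨r, rfl⟩ := List.prefix_of_prefix_length_le hx hy hl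
  refine ⟨r, rfl, ?_⟩
  rw [List.append_assoc] at h
  exact List.append_cancel_left h

def EqA (u v : Word) : Prop := u ++ [Letter.a] ++ v = comp v ++ [Letter.a] ++ u
def EqB (u v : Word) : Prop := u ++ [Letter.a] ++ v = comp v ++ [Letter.b] ++ comp u
def EqC (u v : Word) : Prop := u ++ [Letter.a] ++ v = v ++ [Letter.a] ++ comp u

lemma master : ∀ N : ℕ, ∀ u v : Word, u.length + v.length ≤ N →
    (EqA u v → v.reverse = comp v ∧ u.reverse = u) ∧
    (EqB u v → u.reverse = u ∧ v.reverse = v) ∧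
    (EqC u v → v.reverse = v ∧ u.reverse = comp u) := by
  intro N
  induction N with
  | zero =>
    intro u v hlen
    have hu : u = [] := List.eq_nil_of_length_eq_zero (by omega)
    have hv : v = [] := List.eq_nil_of_length_eq_zero (by omega)
    subst hu; subst hv
    refine ⟨fun _ => ⟨rfl, rfl⟩, fun h => ?_, fun _ => ⟨rfl, rfl⟩⟩
    simp [EqB] at h
  | succ N ih =>
    intro u v hlen
    refine ⟨?_, ?_, ?_⟩ <;> intro h
    · -- EqA : u ++ [a] ++ v = comp v ++ [a] ++ u
      unfold EqA at h
      rcases lt_trichotomy v.length u.length with hlt | heq | hlt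
      · -- |v| < |u| : u = comp v ++ [a] ++ r, EqA r v
        have h' : (comp v ++ [Letter.a]) ++ u = u ++ ([Letter.a] ++ v) := by
          simpa [List.append_assoc] using h.symm
        obtain ⟨r, hr1, hr2⟩ := split_prefix h' (by simp; omega)
        have hEA : EqA r v := by
          unfold EqA
          calc r ++ [Letter.a] ++ v = u := by simpa [List.append_assoc] using hr2.symm
          _ = comp v ++ [Letter.a] ++ r := by simpa [List.append_assoc] using hr1
        have hlr : u.length = v.length + 1 + r.length := by
          have := congrArg List.length hr1
          simp at this
          omega
        obtain ⟨hvp, hrp⟩ := (ih r v (by omega)).1 hEA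
        have hcv : (comp v).reverse = v := by
          rw [comp_reverse, hvp, comp_comp]
        refine ⟨hvp, ?_⟩
        calc u.reverse = r ++ [Letter.a] ++ v := by
              rw [hr1]; simp [hrp, hvp, List.append_assoc]
        _ = u := by simpa [List.append_assoc] using hr2.symm
      · -- |v| = |u|
        have h' : u ++ ([Letter.a] ++ v) = comp v ++ ([Letter.a] ++ u) := by
          simpa [List.append_assoc] using h
        obtain ⟨h1, h2⟩ := List.append_inj h' (by simp; omega)
        have hvu : v = u := by simpa using h2
        subst hvu
        have : v = [] := comp_eq_self h1.symm
        subst this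
        exact ⟨rfl, rfl⟩
      · -- |u| < |v| : comp v = u ++ [a] ++ r₁, v = r₁ ++ [a] ++ u, EqB u r₁
        have h' : u ++ ([Letter.a] ++ v) = comp v ++ ([Letter.a] ++ u) := by
          simpa [List.append_assoc] using h
        obtain ⟨r, hr1, hr2⟩ := split_prefix h' (by simp; omega)
        cases r with
        | nil =>
          exfalso
          have := congrArg List.length hr1
          simp at this; omega
        | cons c r₁ =>
          simp only [List.cons_append, List.singleton_append] at hr2
          obtain ⟨hc, hv⟩ := List.cons_eq_cons.mp hr2
          subst hc
          have hv' : v = r₁ ++ [Letter.a] ++ u := by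
            simpa [List.append_assoc] using hv
          have hcv : comp v = u ++ [Letter.a] ++ r₁ := by
            simpa [List.append_assoc] using hr1
          have hEB : EqB u r₁ := by
            unfold EqB
            calc u ++ [Letter.a] ++ r₁ = comp v := hcv.symm
            _ = comp r₁ ++ [Letter.b] ++ comp u := by
                rw [hv']; simp [List.append_assoc]
          have hlr : v.length = r₁.length + 1 + u.length := by
            have := congrArg List.length hv'
            simp at this; omega
          obtain ⟨hup, hrp⟩ := (ih u r₁ (by omega)).2.1 hEB
          refine ⟨?_, hup⟩
          calc v.reverse = u ++ [Letter.a] ++ r₁ := by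
                rw [hv']; simp [hup, hrp, List.append_assoc]
          _ = comp v := hcv.symm
    · -- EqB : u ++ [a] ++ v = comp v ++ [b] ++ comp u
      unfold EqB at h
      rcases lt_trichotomy v.length u.length with hlt | heq | hlt
      · -- |v| < |u| : u = comp v ++ [b] ++ r, comp u = r ++ [a] ++ v, EqC r v
        have h' : (comp v ++ [Letter.b]) ++ comp u = u ++ ([Letter.a] ++ v) := by
          simpa [List.append_assoc] using h.symm
        obtain ⟨r, hr1, hr2⟩ := split_prefix h' (by simp; omega)
        -- hr1 : u = (comp v ++ [b]) ++ r ; hr2 : comp u = r ++ ([a] ++ v)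
        have hcu : comp u = v ++ [Letter.a] ++ comp r := by
          rw [hr1]; simp [List.append_assoc]
        have hEC : EqC r v := by
          unfold EqC
          calc r ++ [Letter.a] ++ v = comp u := by simpa [List.append_assoc] using hr2.symm
          _ = v ++ [Letter.a] ++ comp r := hcu
        have hlr : u.length = v.length + 1 + r.length := by
          have := congrArg List.length hr1
          simp at this; omega
        obtain ⟨hvp, hrc⟩ := (ih r v (by omega)).2.2 hEC
        refine ⟨?_, hvp⟩
        have hECeq : r ++ [Letter.a] ++ v = v ++ [Letter.a] ++ comp r := hEC
        have : comp r ++ [Letter.b] ++ comp v = comp v ++ [Letter.b] ++ r := by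
          have := congrArg comp hECeq
          simpa [List.append_assoc] using this
        calc u.reverse = comp r ++ [Letter.b] ++ comp v := by
              rw [hr1]; simp [hrc, hvp, List.append_assoc]
        _ = comp v ++ [Letter.b] ++ r := this
        _ = u := by simpa [List.append_assoc] using hr1.symm
      · -- |v| = |u| : contradiction
        exfalso
        have h' : u ++ ([Letter.a] ++ v) = comp v ++ ([Letter.b] ++ comp u) := by
          simpa [List.append_assoc] using h
        obtain ⟨h1, h2⟩ := List.append_inj h' (by simp; omega)
        simp at h2
      · -- |u| < |v| : comp v = u ++ [a] ++ r₁, v = r₁ ++ [b] ++ comp u, EqA u r₁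
        have h' : u ++ ([Letter.a] ++ v) = comp v ++ ([Letter.b] ++ comp u) := by
          simpa [List.append_assoc] using h
        obtain ⟨r, hr1, hr2⟩ := split_prefix h' (by simp; omega)
        cases r with
        | nil =>
          exfalso
          have := congrArg List.length hr1
          simp at this; omega
        | cons c r₁ =>
          simp only [List.cons_append, List.singleton_append] at hr2
          obtain ⟨hc, hv⟩ := List.cons_eq_cons.mp hr2
          subst hc
          have hv' : v = r₁ ++ [Letter.b] ++ comp u := by
            simpa [List.append_assoc] using hv
          have hcv : comp v = u ++ [Letter.a] ++ r₁ := by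
            simpa [List.append_assoc] using hr1
          have hv'' : v = comp u ++ [Letter.b] ++ comp r₁ := by
            have := congrArg comp hcv
            simpa [List.append_assoc] using this
          have hEA : EqA u r₁ := by
            unfold EqA
            have : comp r₁ ++ [Letter.a] ++ u = comp (r₁ ++ [Letter.b] ++ comp u) := by
              simp [List.append_assoc]
            rw [this, ← hv', hv'']
            simp [List.append_assoc]
          have hlr : v.length = r₁.length + 1 + u.length := by
            have := congrArg List.length hv'
            simp at this; omega
          obtain ⟨hrc, hup⟩ := (ih u r₁ (by omega)).1 hEA
          refine ⟨hup, ?_⟩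
          have hmid : r₁ ++ [Letter.b] ++ comp u = comp u ++ [Letter.b] ++ comp r₁ := by
            rw [← hv', hv'']
          have hrrev : r₁.reverse = comp r₁ := hrc
          calc v.reverse = comp u ++ [Letter.b] ++ comp r₁ := by
                rw [hv']; simp [hup, hrrev, List.append_assoc]
          _ = v := by rw [← hmid, hv']
    · -- EqC : u ++ [a] ++ v = v ++ [a] ++ comp u
      unfold EqC at h
      rcases lt_trichotomy v.length u.length with hlt | heq | hlt
      · -- |v| < |u| : u = v ++ [a] ++ r₁, comp u = r₁ ++ [a] ++ v, EqB r₁ v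
        have h' : v ++ ([Letter.a] ++ comp u) = u ++ ([Letter.a] ++ v) := by
          simpa [List.append_assoc] using h.symm
        obtain ⟨r, hr1, hr2⟩ := split_prefix h' (by omega)
        cases r with
        | nil =>
          exfalso
          have := congrArg List.length hr1
          simp at this; omega
        | cons c r₁ =>
          simp only [List.cons_append, List.singleton_append] at hr2
          obtain ⟨hc, hcu⟩ := List.cons_eq_cons.mp hr2
          subst hc
          have hu' : u = v ++ [Letter.a] ++ r₁ := by
            simpa [List.append_assoc] using hr1
          have hcu' : comp u = r₁ ++ [Letter.a] ++ v := by
            simpa [List.append_assoc] using hcu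
          have hEB : EqB r₁ v := by
            unfold EqB
            calc r₁ ++ [Letter.a] ++ v = comp u := hcu'.symm
            _ = comp v ++ [Letter.b] ++ comp r₁ := by
                rw [hu']; simp [List.append_assoc]
          have hlr : u.length = v.length + 1 + r₁.length := by
            have := congrArg List.length hu'
            simp at this; omega
          obtain ⟨hrp, hvp⟩ := (ih r₁ v (by omega)).2.1 hEB
          refine ⟨hvp, ?_⟩
          calc u.reverse = r₁ ++ [Letter.a] ++ v := by
                rw [hu']; simp [hrp, hvp, List.append_assoc]
          _ = comp u := hcu'.symm
      · -- |v| = |u|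
        have h' : u ++ ([Letter.a] ++ v) = v ++ ([Letter.a] ++ comp u) := by
          simpa [List.append_assoc] using h
        obtain ⟨h1, h2⟩ := List.append_inj h' (by omega)
        have h3 : v = comp u := by simpa using h2
        have : u = [] := comp_eq_self (by rw [← h3, ← h1])
        subst this
        have : v = [] := by simpa using h3
        subst this
        exact ⟨rfl, rfl⟩
      · -- |u| < |v| : v = u ++ [a] ++ r₁ = r₁ ++ [a] ++ comp u, EqC u r₁
        have h' : u ++ ([Letter.a] ++ v) = v ++ ([Letter.a] ++ comp u) := by
          simpa [List.append_assoc] using h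
        obtain ⟨r, hr1, hr2⟩ := split_prefix h' (by omega)
        cases r with
        | nil =>
          exfalso
          have := congrArg List.length hr1
          simp at this; omega
        | cons c r₁ =>
          simp only [List.cons_append, List.singleton_append] at hr2
          obtain ⟨hc, hv⟩ := List.cons_eq_cons.mp hr2
          subst hc
          have hv1 : v = u ++ [Letter.a] ++ r₁ := by
            simpa [List.append_assoc] using hr1
          have hv2 : v = r₁ ++ [Letter.a] ++ comp u := by
            simpa [List.append_assoc] using hv
          have hEC : EqC u r₁ := by
            unfold EqC
            calc u ++ [Letter.a] ++ r₁ = v := hv1.symm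
            _ = r₁ ++ [Letter.a] ++ comp u := hv2
          have hlr : v.length = u.length + 1 + r₁.length := by
            have := congrArg List.length hv1
            simp at this; omega
          obtain ⟨hrp, huc⟩ := (ih u r₁ (by omega)).2.2 hEC
          refine ⟨?_, huc⟩
          calc v.reverse = r₁ ++ [Letter.a] ++ comp u := by
                rw [hv1]; simp [hrp, huc, List.append_assoc]
          _ = v := hv2.symm

end GammaAux


/-- Proposition (ii): for w = u·a·v·b·Sym(u)·b ∈ F_n with u·a its principal
    prefix, both u and u·a·v are palindromes. -/
theorem prop_form_ii (n : ℕ) (w u v : Word) (hw : InF n w)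
    (hdec : w = u ++ [Letter.a] ++ v ++ [Letter.b] ++ sym u ++ [Letter.b])
    (hpp : IsPrincipalPrefix (u ++ [Letter.a]) w) :
    Palindrome u ∧ Palindrome (u ++ [Letter.a] ++ v) := by
  obtain ⟨-, u', v', hpp', hw1, hw2⟩ := hw
  -- uniqueness of the principal prefix
  have hd1 : delta u' ≤ delta (u ++ [Letter.a]) := hpp.2.1 u' hpp'.1
  have hd2 : delta (u ++ [Letter.a]) ≤ delta u' := hpp'.2.1 _ hpp.1
  have hdeq : delta u' = delta (u ++ [Letter.a]) := le_antisymm hd1 hd2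
  have hl1 : (u ++ [Letter.a]).length ≤ u'.length := hpp.2.2 u' hpp'.1 hdeq
  have hl2 : u'.length ≤ (u ++ [Letter.a]).length := hpp'.2.2 _ hpp.1 hdeq.symm
  have hu' : u' = u ++ [Letter.a] := by
    have hpre : u' <+: u ++ [Letter.a] :=
      List.prefix_of_prefix_length_le hpp'.1 hpp.1 hl2
    exact hpre.eq_of_length (le_antisymm hl2 hl1)
  subst hu'
  -- determine v'
  have e := hw1.symm.trans hdec
  have e' : v' ++ [Letter.b] = (v ++ [Letter.b] ++ sym u) ++ [Letter.b] := by
    have h0 : (u ++ [Letter.a]) ++ (v' ++ [Letter.b]) =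
        (u ++ [Letter.a]) ++ ((v ++ [Letter.b] ++ sym u) ++ [Letter.b]) := by
      simpa [List.append_assoc] using e
    exact List.append_cancel_left h0
  have hv' : v' = v ++ [Letter.b] ++ sym u := (List.append_inj' e' rfl).1
  subst hv'
  -- the fixed-point equation
  have e2 := hdec.symm.trans hw2
  have key : (u ++ [Letter.a] ++ v) ++ ([Letter.b] ++ (comp u.reverse ++ [Letter.b]))
      = (comp v ++ [Letter.a] ++ u.reverse) ++ ([Letter.b] ++ (comp u ++ [Letter.b])) := by
    simpa [sym, List.append_assoc] using e2
  obtain ⟨hXY, htail⟩ := List.append_inj' key (by simp)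
  have hupal : u.reverse = u := by
    apply comp_inj
    have h5 : comp u.reverse ++ [Letter.b] = comp u ++ [Letter.b] := by
      simpa using htail
    exact (List.append_inj' h5 rfl).1
  have hEA : EqA u v := by
    unfold EqA
    rw [hupal] at hXY
    exact hXY
  obtain ⟨hvrev, -⟩ := (master (u.length + v.length) u v le_rfl).1 hEA
  refine ⟨hupal, ?_⟩
  unfold Palindrome
  calc (u ++ [Letter.a] ++ v).reverse = comp v ++ [Letter.a] ++ u := by
        simp [hupal, hvrev, List.append_assoc]
  _ = u ++ [Letter.a] ++ v := hEA.symm
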